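/- arXiv:1701.07216 — 2 statements merged into one kernel-verified Lean document; each statement's English description precedes it below -/
import Mathlib

section
/- For n ≥ 3 and 3 ≤ i ≤ n, let N_{n,i} be the set of linked partitions of {1,...,n} in which both vertex i-1 and vertex i are destinations. Then the sum over τ in N_{n,i} of a^{one(τ)} b^{os(τ)-1} equals ((i-3)^2 + 2a(i-3) + a^2)·(a+b)_{n-3}. -/
open Finset Polynomial
open scoped Classical

/-! ### Tree-like tableaux (grid model)
A cell is a pair (row index, column index), both 0-based.  A Ferrers diagram
is a finite lower set of cells.  A tree-like tableau of size `n` is a pair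
`(F, P)` where `P` is the set of pointed cells of the diagram `F`. -/

def IsFerrersGrid (F : Finset (ℕ × ℕ)) : Prop :=
  ∀ p ∈ F, ∀ i j : ℕ, i ≤ p.1 → j ≤ p.2 → (i, j) ∈ F

def IsTLT (F P : Finset (ℕ × ℕ)) : Prop :=
  F.Nonempty ∧ IsFerrersGrid F ∧ P ⊆ F ∧ (0, 0) ∈ P ∧
  (∀ p ∈ P, p ≠ (0, 0) →
    Xor' (∃ i < p.1, (i, p.2) ∈ P) (∃ j < p.2, (p.1, j) ∈ P)) ∧
  (∀ p ∈ F, ∃ q ∈ P, q.1 = p.1) ∧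
  (∀ p ∈ F, ∃ q ∈ P, q.2 = p.2)

/-- The finite set of tree-like tableaux of size `n`. -/
noncomputable def TLT (n : ℕ) : Finset (Finset (ℕ × ℕ) × Finset (ℕ × ℕ)) :=
  ((Finset.range n ×ˢ Finset.range n).powerset ×ˢ
    (Finset.range n ×ˢ Finset.range n).powerset).filter
    (fun T => IsTLT T.1 T.2 ∧ T.2.card = n)

/-- number of non-root points in the topmost row -/
noncomputable def topT (P : Finset (ℕ × ℕ)) : ℕ :=
  (P.filter (fun p => p.1 = 0 ∧ p.2 ≠ 0)).card
/-- number of non-root points in the leftmost column -/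
noncomputable def leftT (P : Finset (ℕ × ℕ)) : ℕ :=
  (P.filter (fun p => p.2 = 0 ∧ p.1 ≠ 0)).card
/-- corners of a Ferrers diagram -/
noncomputable def cornersT (F : Finset (ℕ × ℕ)) : Finset (ℕ × ℕ) :=
  F.filter (fun p => (p.1 + 1, p.2) ∉ F ∧ (p.1, p.2 + 1) ∉ F)
/-- non-occupied corners -/
noncomputable def nocT (F P : Finset (ℕ × ℕ)) : ℕ :=
  ((cornersT F).filter (fun p => p ∉ P)).card
/-- occupied corners -/
noncomputable def ocT (F P : Finset (ℕ × ℕ)) : ℕ :=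
  ((cornersT F).filter (fun p => p ∈ P)).card
/-- symmetric (invariant under reflection across the main diagonal) -/
def IsSymTLT (F P : Finset (ℕ × ℕ)) : Prop :=
  F.image Prod.swap = F ∧ P.image Prod.swap = P

/-! ### Alternative tableaux (border-label model)
A Ferrers diagram of size `n` (empty rows and columns allowed) is encoded by
the set `C ⊆ {1,…,n}` of its column labels (labels of the south-east border
steps, read from north-east to south-west); the remaining labels are row
labels.  Row `r` and column `c` intersect in a cell (written `(r, c)`)
exactly when `r < c`.  Inside a row, cells further to the left have *larger*
column labels; inside a column, cells further up have *smaller* row labels.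
An alternative tableau is `(C, L, U)` where `L` (resp. `U`) is the set of
cells containing a left (resp. up) arrow. -/

def IsAT (n : ℕ) (C : Finset ℕ) (L U : Finset (ℕ × ℕ)) : Prop :=
  C ⊆ Finset.Icc 1 n ∧ Disjoint L U ∧
  (∀ p ∈ L ∪ U, p.1 ∈ Finset.Icc 1 n ∧ p.1 ∉ C ∧ p.2 ∈ C ∧ p.1 < p.2) ∧
  (∀ p ∈ L, ∀ c' : ℕ, p.2 < c' → (p.1, c') ∉ L ∪ U) ∧
  (∀ p ∈ U, ∀ r' : ℕ, r' < p.1 → (r', p.2) ∉ L ∪ U)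

/-- the finite set of alternative tableaux of size `n` -/
noncomputable def ATset (n : ℕ) :
    Finset (Finset ℕ × Finset (ℕ × ℕ) × Finset (ℕ × ℕ)) :=
  ((Finset.Icc 1 n).powerset ×ˢ
    ((Finset.Icc 1 n ×ˢ Finset.Icc 1 n).powerset ×ˢ
      (Finset.Icc 1 n ×ˢ Finset.Icc 1 n).powerset)).filter
    (fun T => IsAT n T.1 T.2.1 T.2.2)

/-- alternative tableaux of size `n` in which every column contains an up arrow -/
noncomputable def ATstar (n : ℕ) :
    Finset (Finset ℕ × Finset (ℕ × ℕ) × Finset (ℕ × ℕ)) :=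
  (ATset n).filter (fun T => ∀ c ∈ T.1, ∃ p ∈ T.2.2, p.2 = c)

/-- label of the topmost row -/
noncomputable def topRowA (n : ℕ) (C : Finset ℕ) : ℕ :=
  WithTop.untopD 0 ((Finset.Icc 1 n \ C).min)
/-- number of arrows in the topmost row -/
noncomputable def topA (n : ℕ) (C : Finset ℕ) (L U : Finset (ℕ × ℕ)) : ℕ :=
  ((L ∪ U).filter (fun p => p.1 = topRowA n C)).card
/-- number of unrestricted rows (rows with no left arrow) -/
noncomputable def urrA (n : ℕ) (C : Finset ℕ) (L : Finset (ℕ × ℕ)) : ℕ :=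
  ((Finset.Icc 1 n \ C).filter (fun r => ∀ p ∈ L, p.1 ≠ r)).card
/-- number of non-occupied corners (the corners are exactly the cells `(c-1, c)`
with `c` a column label and `c-1` a row label) -/
noncomputable def nocA (n : ℕ) (C : Finset ℕ) (L U : Finset (ℕ × ℕ)) : ℕ :=
  (C.filter (fun c => c - 1 ∈ Finset.Icc 1 n \ C ∧ (c - 1, c) ∉ L ∪ U)).card
/-- symmetric alternative tableau of size `2n` (reflection across the main
diagonal exchanges border label `k` with `2n+1-k`, rows with columns and
left arrows with up arrows) -/
def IsSymAT (n : ℕ) (C : Finset ℕ) (L U : Finset (ℕ × ℕ)) : Prop :=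
  (∀ k ∈ Finset.Icc 1 (2 * n), (k ∈ C ↔ (2 * n + 1 - k) ∉ C)) ∧
  (∀ r c : ℕ, (r, c) ∈ L ↔ (2 * n + 1 - c, 2 * n + 1 - r) ∈ U)

/-! ### Linked partitions (linear representation / arc model)
A linked partition of `{1,…,n}` is identified with its set of arcs `(i, j)`,
`i < j`: each vertex is the right-hand endpoint of at most one arc. -/

def IsLP (n : ℕ) (A : Finset (ℕ × ℕ)) : Prop :=
  (∀ p ∈ A, 1 ≤ p.1 ∧ p.1 < p.2 ∧ p.2 ≤ n) ∧
  (∀ p ∈ A, ∀ q ∈ A, p.2 = q.2 → p.1 = q.1)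

noncomputable def LP (n : ℕ) : Finset (Finset (ℕ × ℕ)) :=
  ((Finset.Icc 1 n ×ˢ Finset.Icc 1 n).powerset).filter (IsLP n)

/-- number of origins plus singletons (= vertices with no incoming arc) -/
noncomputable def osL (n : ℕ) (A : Finset (ℕ × ℕ)) : ℕ :=
  ((Finset.Icc 1 n).filter (fun j => ∀ p ∈ A, p.2 ≠ j)).card
/-- number of arcs with left-hand endpoint `1` -/
noncomputable def oneL (A : Finset (ℕ × ℕ)) : ℕ :=
  (A.filter (fun p => p.1 = 1)).card
/-- a destination: only a right-hand endpoint -/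
def IsDest (A : Finset (ℕ × ℕ)) (j : ℕ) : Prop :=
  (∃ p ∈ A, p.2 = j) ∧ ∀ p ∈ A, p.1 ≠ j

/-- consecutive pairs of a finite set of naturals -/
noncomputable def consecPairs (S : Finset ℕ) : Finset (ℕ × ℕ) :=
  (S ×ˢ S).filter (fun p => p.1 < p.2 ∧ ∀ k ∈ S, ¬(p.1 < k ∧ k < p.2))

/-- the set of row labels of cells of column `c` containing an arrow -/
noncomputable def colRows (L U : Finset (ℕ × ℕ)) (c : ℕ) : Finset ℕ :=
  ((L ∪ U).filter (fun p => p.2 = c)).image Prod.fst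

/-- the map `Φ`: for each column `j`, with the up arrow in row `i₁` and the
left arrows in rows `i₂ < … < i_t`, draw the arcs `(i₁,i₂), …, (i_{t-1},i_t), (i_t, j)`,
i.e. the consecutive pairs of `{i₁,…,i_t, j}`. -/
noncomputable def Phi (T : Finset ℕ × Finset (ℕ × ℕ) × Finset (ℕ × ℕ)) :
    Finset (ℕ × ℕ) :=
  T.1.biUnion (fun c => consecPairs (insert c (colRows T.2.1 T.2.2 c)))

/-! ### Type B alternative tableaux
Encoded by `(C, L, U)` with `C ⊆ Icc 1 n` the set of column labels of the
subdiagram; rows of the shifted diagram are labelled by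
`(Icc 1 n \ C) ∪ (-C)`, rows higher up having smaller labels.  Row `x` and
column `c` intersect in a cell exactly when (`x > 0` and `x < c`) or
(`x < 0` and `-x ≤ c`); the cell `(-c, c)` is the diagonal cell of row `-c`. -/

def cellB (n : ℕ) (C : Finset ℤ) (x c : ℤ) : Prop :=
  c ∈ C ∧ ((1 ≤ x ∧ x ≤ (n : ℤ) ∧ x ∉ C ∧ x < c) ∨ (x < 0 ∧ -x ∈ C ∧ -x ≤ c))

def IsATB (n : ℕ) (C : Finset ℤ) (L U : Finset (ℤ × ℤ)) : Prop :=
  C ⊆ Finset.Icc 1 (n : ℤ) ∧ Disjoint L U ∧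
  (∀ p ∈ L ∪ U, p.2 ∈ C ∧
    ((1 ≤ p.1 ∧ p.1 ≤ (n : ℤ) ∧ p.1 ∉ C ∧ p.1 < p.2) ∨
      (p.1 < 0 ∧ -p.1 ∈ C ∧ -p.1 < p.2))) ∧
  (∀ p ∈ L, ∀ c' : ℤ, p.2 < c' → (p.1, c') ∉ L ∪ U) ∧
  (∀ p ∈ U, ∀ x' : ℤ, x' < p.1 → (x', p.2) ∉ L ∪ U) ∧
  (∀ i ∈ C, (∃ p ∈ U, p.2 = i) → ∀ c' : ℤ, (-i, c') ∉ L ∪ U)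

noncomputable def ATB (n : ℕ) :
    Finset (Finset ℤ × Finset (ℤ × ℤ) × Finset (ℤ × ℤ)) :=
  ((Finset.Icc (1 : ℤ) (n : ℤ)).powerset ×ˢ
    ((Finset.Icc (-(n : ℤ)) (n : ℤ) ×ˢ Finset.Icc (1 : ℤ) (n : ℤ)).powerset ×ˢ
      (Finset.Icc (-(n : ℤ)) (n : ℤ) ×ˢ Finset.Icc (1 : ℤ) (n : ℤ)).powerset)).filter
    (fun T => IsATB n T.1 T.2.1 T.2.2)

/-- the row labels of a type B alternative tableau -/
noncomputable def rowsB (n : ℕ) (C : Finset ℤ) : Finset ℤ :=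
  (Finset.Icc (1 : ℤ) (n : ℤ) \ C) ∪ C.image (fun c => -c)

/-- number of unrestricted rows: row `x` is unrestricted when it contains no
left arrow and column `|x|` (if it exists) contains no up arrow -/
noncomputable def urrB (n : ℕ) (C : Finset ℤ) (L U : Finset (ℤ × ℤ)) : ℕ :=
  ((rowsB n C).filter (fun x => (∀ p ∈ L, p.1 ≠ x) ∧ ∀ p ∈ U, p.2 ≠ |x|)).card

/-- the corners of the shifted Ferrers diagram -/
noncomputable def cornersB (n : ℕ) (C : Finset ℤ) : Finset (ℤ × ℤ) :=
  (Finset.Icc (-(n : ℤ)) (n : ℤ) ×ˢ Finset.Icc (1 : ℤ) (n : ℤ)).filter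
    (fun p => cellB n C p.1 p.2 ∧ (∀ x' : ℤ, p.1 < x' → ¬ cellB n C x' p.2) ∧
      (∀ c' : ℤ, c' < p.2 → ¬ cellB n C p.1 c'))

/-- number of non-occupied diagonal corners -/
noncomputable def nocDiagB (n : ℕ) (C : Finset ℤ) (L U : Finset (ℤ × ℤ)) : ℕ :=
  ((cornersB n C).filter (fun p => p.1 = -p.2 ∧ p ∉ L ∪ U)).card
/-- number of non-occupied non-diagonal corners -/
noncomputable def nocOffB (n : ℕ) (C : Finset ℤ) (L U : Finset (ℤ × ℤ)) : ℕ :=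
  ((cornersB n C).filter (fun p => p.1 ≠ -p.2 ∧ p ∉ L ∪ U)).card

/-! ### Type B linked partitions
A pair `(V, A)`: for each `i ∈ {1,…,n}` exactly one of `i, -i` belongs to
the vertex set `V`; `A` is the set of arcs `(x, y)`, `x < y`, with each
vertex the right-hand endpoint of at most one arc. -/

def IsLPB (n : ℕ) (V : Finset ℤ) (A : Finset (ℤ × ℤ)) : Prop :=
  (∀ v ∈ V, 1 ≤ |v| ∧ |v| ≤ (n : ℤ)) ∧
  (∀ i ∈ Finset.Icc (1 : ℤ) (n : ℤ), ((i ∈ V ∧ -i ∉ V) ∨ (-i ∈ V ∧ i ∉ V))) ∧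
  (∀ p ∈ A, p.1 ∈ V ∧ p.2 ∈ V ∧ p.1 < p.2) ∧
  (∀ p ∈ A, ∀ q ∈ A, p.2 = q.2 → p.1 = q.1)

noncomputable def LPB (n : ℕ) : Finset (Finset ℤ × Finset (ℤ × ℤ)) :=
  ((Finset.Icc (-(n : ℤ)) (n : ℤ)).powerset ×ˢ
    (Finset.Icc (-(n : ℤ)) (n : ℤ) ×ˢ Finset.Icc (-(n : ℤ)) (n : ℤ)).powerset).filter
    (fun T => IsLPB n T.1 T.2)

/-- number of origins plus singletons (= vertices with no incoming arc) -/
noncomputable def osB (V : Finset ℤ) (A : Finset (ℤ × ℤ)) : ℕ :=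
  (V.filter (fun v => ∀ p ∈ A, p.2 ≠ v)).card

/-- a legal destination: `j` is only a right-hand endpoint, and its incoming
arc `(a, j)` satisfies `|a| < |j|` -/
def IsLegalDestB (A : Finset (ℤ × ℤ)) (j : ℤ) : Prop :=
  (∃ p ∈ A, p.2 = j ∧ |p.1| < |j|) ∧ ∀ p ∈ A, p.1 ≠ j

/-- consecutive pairs of a finite set of integers -/
noncomputable def consecPairsZ (S : Finset ℤ) : Finset (ℤ × ℤ) :=
  (S ×ˢ S).filter (fun p => p.1 < p.2 ∧ ∀ k ∈ S, ¬(p.1 < k ∧ k < p.2))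

/-- row labels of cells of column `c` containing an arrow -/
noncomputable def colRowsB (L U : Finset (ℤ × ℤ)) (c : ℤ) : Finset ℤ :=
  ((L ∪ U).filter (fun p => p.2 = c)).image Prod.fst

/-- column `c` contains an up arrow -/
def HasUp (U : Finset (ℤ × ℤ)) (c : ℤ) : Prop := ∃ p ∈ U, p.2 = c

/-- the map `Φ_B`: columns with an up arrow give positive vertices and chains
of arcs through their arrows (consecutive pairs of the arrow rows together
with the column label); columns without an up arrow give negative vertices
`-j` and arcs from `-j` to each row containing a left arrow of that column;
rows give positive vertices. -/
noncomputable def PhiB (n : ℕ) (T : Finset ℤ × Finset (ℤ × ℤ) × Finset (ℤ × ℤ)) :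
    Finset ℤ × Finset (ℤ × ℤ) :=
  ((Finset.Icc (1 : ℤ) (n : ℤ) \ T.1) ∪ T.1.filter (fun c => HasUp T.2.2 c) ∪
      (T.1.filter (fun c => ¬ HasUp T.2.2 c)).image (fun c => -c),
    (T.1.filter (fun c => HasUp T.2.2 c)).biUnion
        (fun c => consecPairsZ (insert c (colRowsB T.2.1 T.2.2 c))) ∪
      (T.1.filter (fun c => ¬ HasUp T.2.2 c)).biUnion
        (fun c => (colRowsB T.2.1 T.2.2 c).image (fun r => (-c, r))))

/-! ### Auxiliary material for Statement 9 -/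

/-- the source of the (unique) arc into `j`, or `0` if there is none -/
noncomputable def srcL (A : Finset (ℕ × ℕ)) (j : ℕ) : ℕ :=
  (A.filter (fun p => p.2 = j)).sup Prod.fst

/-- the weight of a choice of incoming arc source (`0` = no arc) -/
noncomputable def wgtL (a b : ℤ) (x : ℕ) : ℤ :=
  if x = 0 then b else if x = 1 then a else 1

lemma mem_LP_iff {n : ℕ} {A : Finset (ℕ × ℕ)} : A ∈ LP n ↔ IsLP n A := by
  unfold LP
  simp only [Finset.mem_filter, Finset.mem_powerset]
  constructor
  · exact fun h => h.2
  · intro h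
    refine ⟨fun p hp => ?_, h⟩
    have h1 := h.1 p hp
    simp only [Finset.mem_product, Finset.mem_Icc]
    omega

lemma srcL_eq {n : ℕ} {A : Finset (ℕ × ℕ)} (hA : IsLP n A) {x j : ℕ}
    (hx : (x, j) ∈ A) : srcL A j = x := by
  unfold srcL
  apply le_antisymm
  · apply Finset.sup_le
    intro p hp
    simp only [Finset.mem_filter] at hp
    exact le_of_eq (hA.2 p hp.1 (x, j) hx hp.2)
  · have hmem : (x, j) ∈ A.filter (fun p => p.2 = j) :=
      Finset.mem_filter.mpr ⟨hx, rfl⟩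
    exact Finset.le_sup (f := Prod.fst) hmem

lemma srcL_eq_zero {n : ℕ} {A : Finset (ℕ × ℕ)} (hA : IsLP n A) (j : ℕ) :
    srcL A j = 0 ↔ ∀ p ∈ A, p.2 ≠ j := by
  constructor
  · intro h p hp hpj
    have h1 := hA.1 p hp
    have h2 : (p.1, j) ∈ A := by rw [← hpj]; exact hp
    have h3 := srcL_eq hA h2
    omega
  · intro h
    unfold srcL
    rw [Finset.filter_false_of_mem (fun p hp => h p hp), Finset.sup_empty]
    rfl

lemma srcL_mem {n : ℕ} {A : Finset (ℕ × ℕ)} (hA : IsLP n A) {j : ℕ}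
    (h : srcL A j ≠ 0) : (srcL A j, j) ∈ A := by
  have h1 : ¬ ∀ p ∈ A, p.2 ≠ j := fun hall => h ((srcL_eq_zero hA j).2 hall)
  push_neg at h1
  obtain ⟨p, hp, hpj⟩ := h1
  have h2 : (p.1, j) ∈ A := by rw [← hpj]; exact hp
  rw [srcL_eq hA h2]
  exact h2

lemma poch_eval_prod (m : ℕ) (x : ℤ) :
    (ascPochhammer ℤ m).eval x = ∏ k ∈ Finset.range m, (x + (k : ℤ)) := by
  induction m with
  | zero => simp
  | succ m ih =>
      rw [ascPochhammer_succ_eval, Finset.prod_range_succ, ih]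

lemma sum_wgt (a b : ℤ) (T : Finset ℕ) (h1 : 1 ∈ T) (h0 : 0 ∉ T) :
    ∑ x ∈ T, wgtL a b x = a + ((T.card - 1 : ℕ) : ℤ) := by
  have hw : ∀ x ∈ T.erase 1, wgtL a b x = 1 := by
    intro x hx
    have hx1 : x ≠ 1 := Finset.ne_of_mem_erase hx
    have hx0 : x ≠ 0 := by rintro rfl; exact h0 (Finset.mem_of_mem_erase hx)
    simp [wgtL, hx0, hx1]
  have key : ∑ x ∈ T.erase 1, wgtL a b x = (((T.erase 1).card : ℕ) : ℤ) := by
    rw [Finset.sum_congr rfl hw, Finset.sum_const, nsmul_eq_mul, mul_one]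
  have hins := Finset.sum_insert (s := T.erase 1) (f := wgtL a b)
    (Finset.notMem_erase 1 T)
  rw [Finset.insert_erase h1] at hins
  rw [hins, key, Finset.card_erase_of_mem h1]
  simp [wgtL]


/-- the allowed incoming-source choices for vertex `j` (`0` = no arc) -/
noncomputable def tN (i j : ℕ) : Finset ℕ :=
  if j = i - 1 ∨ j = i then Finset.Icc 1 (i - 2)
  else insert 0 ((Finset.Icc 1 (j - 1)).filter (fun x => x ≠ i - 1 ∧ x ≠ i))

/-- reconstruct an arc set from a choice function -/
noncomputable def GN (n : ℕ) (g : ∀ j ∈ Finset.Icc 2 n, ℕ) : Finset (ℕ × ℕ) :=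
  ((Finset.Icc 2 n).attach.filter (fun j => g j.1 j.2 ≠ 0)).image
    (fun j => (g j.1 j.2, j.1))

lemma tN_bound {n i j x : ℕ} (hi : 3 ≤ i) (hj : j ∈ Finset.Icc 2 n)
    (hx : x ∈ tN i j) (hx0 : x ≠ 0) :
    1 ≤ x ∧ x < j ∧ x ≠ i - 1 ∧ x ≠ i := by
  simp only [Finset.mem_Icc] at hj
  by_cases hcase : j = i - 1 ∨ j = i
  · rw [tN, if_pos hcase] at hx
    simp only [Finset.mem_Icc] at hx
    omega
  · rw [tN, if_neg hcase] at hx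
    simp only [Finset.mem_insert, Finset.mem_filter, Finset.mem_Icc] at hx
    omega

lemma GN_el {n : ℕ} {g : ∀ j ∈ Finset.Icc 2 n, ℕ} {p : ℕ × ℕ}
    (hp : p ∈ GN n g) :
    ∃ (j : ℕ) (hj : j ∈ Finset.Icc 2 n), p = (g j hj, j) ∧ g j hj ≠ 0 := by
  simp only [GN, Finset.mem_image, Finset.mem_filter, Finset.mem_attach,
    true_and] at hp
  obtain ⟨j, hj0, hjp⟩ := hp
  exact ⟨j.1, j.2, hjp.symm, hj0⟩

lemma GN_in {n : ℕ} {g : ∀ j ∈ Finset.Icc 2 n, ℕ} {j : ℕ}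
    (hj : j ∈ Finset.Icc 2 n) (h0 : g j hj ≠ 0) : (g j hj, j) ∈ GN n g := by
  simp only [GN, Finset.mem_image, Finset.mem_filter, Finset.mem_attach,
    true_and]
  exact ⟨⟨j, hj⟩, h0, rfl⟩

lemma GN_LP {n i : ℕ} (hi : 3 ≤ i) {g : ∀ j ∈ Finset.Icc 2 n, ℕ}
    (hg : ∀ j (hj : j ∈ Finset.Icc 2 n), g j hj ∈ tN i j) : IsLP n (GN n g) := by
  constructor
  · intro p hp
    obtain ⟨j, hj, rfl, h0⟩ := GN_el hp
    have hb := tN_bound hi hj (hg j hj) h0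
    have hjn : 2 ≤ j ∧ j ≤ n := by simpa [Finset.mem_Icc] using hj
    exact ⟨hb.1, hb.2.1, hjn.2⟩
  · intro p hp q hq hpq
    obtain ⟨j1, hj1, rfl, h01⟩ := GN_el hp
    obtain ⟨j2, hj2, rfl, h02⟩ := GN_el hq
    simp only at hpq
    subst hpq
    rfl

lemma GN_src {n i : ℕ} (hi : 3 ≤ i) {g : ∀ j ∈ Finset.Icc 2 n, ℕ}
    (hg : ∀ j (hj : j ∈ Finset.Icc 2 n), g j hj ∈ tN i j)
    (j : ℕ) (hj : j ∈ Finset.Icc 2 n) : srcL (GN n g) j = g j hj := by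
  by_cases h0 : g j hj = 0
  · rw [h0, srcL_eq_zero (GN_LP hi hg) j]
    intro p hp hpj
    obtain ⟨j', hj', rfl, h0'⟩ := GN_el hp
    simp only at hpj
    subst hpj
    exact h0' h0
  · exact srcL_eq (GN_LP hi hg) (GN_in hj h0)

set_option maxHeartbeats 1600000

/-- for `3 ≤ i ≤ n`, summing over linked partitions of
`{1,…,n}` in which both `i-1` and `i` are destinations,
`∑ a^{one τ} b^{os τ - 1} = ((i-3)² + 2a(i-3) + a²) (a+b)_{n-3}`. -/
theorem lp_N_enumeration (n i : ℕ) (hn : 3 ≤ n) (hi : 3 ≤ i) (hin : i ≤ n)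
    (a b : ℤ) :
    ∑ A ∈ (LP n).filter (fun A => IsDest A (i - 1) ∧ IsDest A i),
        a ^ oneL A * b ^ (osL n A - 1) =
      (((i : ℤ) - 3) ^ 2 + 2 * a * ((i : ℤ) - 3) + a ^ 2) *
        (ascPochhammer ℤ (n - 3)).eval (a + b) := by
  classical
  -- Step A : the sum over linked partitions equals a sum over `pi`
  have stepA :
      ∑ A ∈ (LP n).filter (fun A => IsDest A (i - 1) ∧ IsDest A i),
          a ^ oneL A * b ^ (osL n A - 1) =
        ∑ g ∈ (Finset.Icc 2 n).pi (tN i),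
          ∏ j ∈ (Finset.Icc 2 n).attach, wgtL a b (g j.1 j.2) := by
    refine Finset.sum_nbij' (fun A => fun j _ => srcL A j) (GN n) ?_ ?_ ?_ ?_ ?_
    · intro A hA
      simp only [Finset.mem_filter] at hA
      obtain ⟨hALP, hd1, hd2⟩ := hA
      have hA' := mem_LP_iff.mp hALP
      rw [Finset.mem_pi]
      intro j hj
      simp only [Finset.mem_Icc] at hj
      by_cases hcase : j = i - 1 ∨ j = i
      · rw [tN, if_pos hcase]
        simp only [Finset.mem_Icc]
        have hd : IsDest A j := by
          rcases hcase with h | h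
          · rw [h]; exact hd1
          · rw [h]; exact hd2
        obtain ⟨⟨p, hp, hpj⟩, -⟩ := hd
        have hmem : (p.1, j) ∈ A := by rw [← hpj]; exact hp
        have hsrc : srcL A j = p.1 := srcL_eq hA' hmem
        have h1 : 1 ≤ p.1 ∧ p.1 < p.2 ∧ p.2 ≤ n := hA'.1 p hp
        have hne1 : p.1 ≠ i - 1 := hd1.2 p hp
        have hne2 : p.1 ≠ i := hd2.2 p hp
        omega
      · rw [tN, if_neg hcase]
        simp only [Finset.mem_insert, Finset.mem_filter, Finset.mem_Icc]
        by_cases h0 : srcL A j = 0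
        · exact Or.inl h0
        · have hmem := srcL_mem hA' h0
          have h1 : 1 ≤ srcL A j ∧ srcL A j < j ∧ j ≤ n := hA'.1 _ hmem
          have hne1 : srcL A j ≠ i - 1 := hd1.2 _ hmem
          have hne2 : srcL A j ≠ i := hd2.2 _ hmem
          right
          omega
    · intro g hg
      rw [Finset.mem_pi] at hg
      have hglp := GN_LP hi hg
      have hdest : ∀ j, j = i - 1 ∨ j = i → IsDest (GN n g) j := by
        intro j hcase
        have hjs : j ∈ Finset.Icc 2 n := by
          simp only [Finset.mem_Icc]; omega
        have hval : g j hjs ∈ tN i j := hg j hjs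
        have h0 : g j hjs ≠ 0 := by
          rw [tN, if_pos hcase] at hval
          simp only [Finset.mem_Icc] at hval
          omega
        constructor
        · exact ⟨(g j hjs, j), GN_in hjs h0, rfl⟩
        · intro p hp
          obtain ⟨j', hj', rfl, h0'⟩ := GN_el hp
          have hb := tN_bound hi hj' (hg j' hj') h0'
          simp only
          omega
      simp only [Finset.mem_filter]
      exact ⟨mem_LP_iff.mpr hglp, hdest (i - 1) (Or.inl rfl),
        hdest i (Or.inr rfl)⟩
    · intro A hA
      simp only [Finset.mem_filter] at hA
      have hA' := mem_LP_iff.mp hA.1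
      show GN n (fun j _ => srcL A j) = A
      ext p
      constructor
      · intro hp
        obtain ⟨j, hj, rfl, h0⟩ := GN_el hp
        exact srcL_mem hA' h0
      · intro hp
        have h1 : 1 ≤ p.1 ∧ p.1 < p.2 ∧ p.2 ≤ n := hA'.1 p hp
        have hjs : p.2 ∈ Finset.Icc 2 n := by simp only [Finset.mem_Icc]; omega
        have hsrc : srcL A p.2 = p.1 := srcL_eq hA' (show (p.1, p.2) ∈ A from hp)
        have h0 : srcL A p.2 ≠ 0 := by omega
        have hmem2 : (srcL A p.2, p.2) ∈ GN n (fun j _ => srcL A j) :=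
          GN_in (g := fun j _ => srcL A j) hjs h0
        have hmem3 : ((p.1 : ℕ), p.2) ∈ GN n (fun j _ => srcL A j) := by
          rw [← hsrc]; exact hmem2
        exact hmem3
    · intro g hg
      rw [Finset.mem_pi] at hg
      funext j hj
      exact GN_src hi hg j hj
    · intro A hA
      simp only [Finset.mem_filter] at hA
      have hA' := mem_LP_iff.mp hA.1
      show a ^ oneL A * b ^ (osL n A - 1)
        = ∏ j ∈ (Finset.Icc 2 n).attach, wgtL a b (srcL A j.1)
      have hrw : ∏ j ∈ (Finset.Icc 2 n).attach, wgtL a b (srcL A j.1)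
          = ∏ j ∈ Finset.Icc 2 n, wgtL a b (srcL A j) :=
        Finset.prod_attach (Finset.Icc 2 n) (fun j => wgtL a b (srcL A j))
      rw [hrw, ← Finset.prod_filter_mul_prod_filter_not (Finset.Icc 2 n)
          (fun j => srcL A j = 0),
        ← Finset.prod_filter_mul_prod_filter_not
          ((Finset.Icc 2 n).filter (fun j => ¬srcL A j = 0))
          (fun j => srcL A j = 1)]
      have e0 : ∏ j ∈ (Finset.Icc 2 n).filter (fun j => srcL A j = 0),
          wgtL a b (srcL A j)
          = b ^ ((Finset.Icc 2 n).filter (fun j => srcL A j = 0)).card := by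
        rw [Finset.prod_congr rfl (g := fun _ => b) (fun j hj => by
          simp only [Finset.mem_filter] at hj
          simp [wgtL, hj.2]), Finset.prod_const]
      have e1 : ∏ j ∈ ((Finset.Icc 2 n).filter (fun j => ¬srcL A j = 0)).filter
            (fun j => srcL A j = 1), wgtL a b (srcL A j)
          = a ^ (((Finset.Icc 2 n).filter (fun j => ¬srcL A j = 0)).filter
            (fun j => srcL A j = 1)).card := by
        rw [Finset.prod_congr rfl (g := fun _ => a) (fun j hj => by
          simp only [Finset.mem_filter] at hj
          simp [wgtL, hj.2, hj.1.2]), Finset.prod_const]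
      have e2 : ∏ j ∈ ((Finset.Icc 2 n).filter (fun j => ¬srcL A j = 0)).filter
            (fun j => ¬srcL A j = 1), wgtL a b (srcL A j) = 1 := by
        apply Finset.prod_eq_one
        intro j hj
        simp only [Finset.mem_filter] at hj
        simp [wgtL, hj.1.2, hj.2]
      have hone : oneL A = (((Finset.Icc 2 n).filter (fun j => ¬srcL A j = 0)).filter
          (fun j => srcL A j = 1)).card := by
        have hset : ((Finset.Icc 2 n).filter (fun j => ¬srcL A j = 0)).filter
            (fun j => srcL A j = 1)
            = (Finset.Icc 2 n).filter (fun j => srcL A j = 1) := by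
          rw [Finset.filter_filter]
          apply Finset.filter_congr
          intro j _
          constructor
          · rintro ⟨-, h⟩; exact h
          · intro h; exact ⟨by omega, h⟩
        rw [hset]
        unfold oneL
        apply Finset.card_bij (fun p _ => p.2)
        · intro p hp
          simp only [Finset.mem_filter] at hp ⊢
          have h1 : 1 ≤ p.1 ∧ p.1 < p.2 ∧ p.2 ≤ n := hA'.1 p hp.1
          have hsrc : srcL A p.2 = p.1 :=
            srcL_eq hA' (show (p.1, p.2) ∈ A from hp.1)
          constructor
          · simp only [Finset.mem_Icc]; omega
          · omega
        · intro p hp q hq h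
          simp only [Finset.mem_filter] at hp hq
          have h1 := hA'.2 p hp.1 q hq.1 h
          exact Prod.ext h1 h
        · intro j hj
          simp only [Finset.mem_filter] at hj
          have h0 : srcL A j ≠ 0 := by omega
          have hm := srcL_mem hA' h0
          refine ⟨(srcL A j, j), Finset.mem_filter.mpr ⟨hm, hj.2⟩, rfl⟩
      have hos : osL n A
          = ((Finset.Icc 2 n).filter (fun j => srcL A j = 0)).card + 1 := by
        have hset0 : (Finset.Icc 1 n).filter (fun j => ∀ p ∈ A, p.2 ≠ j)
            = insert 1 ((Finset.Icc 2 n).filter (fun j => srcL A j = 0)) := by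
          ext j
          simp only [Finset.mem_filter, Finset.mem_insert, Finset.mem_Icc]
          constructor
          · rintro ⟨hj, hP⟩
            by_cases hj1 : j = 1
            · exact Or.inl hj1
            · exact Or.inr ⟨⟨by omega, hj.2⟩, (srcL_eq_zero hA' j).mpr hP⟩
          · rintro (rfl | ⟨hj, h0⟩)
            · refine ⟨⟨le_refl 1, by omega⟩, fun p hp => ?_⟩
              have := hA'.1 p hp
              omega
            · exact ⟨⟨by omega, hj.2⟩, (srcL_eq_zero hA' j).mp h0⟩
        unfold osL
        rw [hset0, Finset.card_insert_of_notMem]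
        simp only [Finset.mem_filter, Finset.mem_Icc]
        omega
      have hos1 : osL n A - 1
          = ((Finset.Icc 2 n).filter (fun j => srcL A j = 0)).card := by
        omega
      rw [e0, e1, e2, hos1, ← hone]
      ring
  -- Step P : expand the sum over `pi` as a product
  have stepP : ∏ j ∈ Finset.Icc 2 n, ∑ x ∈ tN i j, wgtL a b x
      = ∑ g ∈ (Finset.Icc 2 n).pi (tN i),
          ∏ j ∈ (Finset.Icc 2 n).attach, wgtL a b (g j.1 j.2) :=
    Finset.prod_sum (Finset.Icc 2 n) (tN i) (fun _ x => wgtL a b x)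
  rw [stepA, ← stepP]
  clear stepA stepP
  -- evaluate the two special factors
  have hfact2 : ∀ j, (j = i - 1 ∨ j = i) →
      ∑ x ∈ tN i j, wgtL a b x = a + ((i - 3 : ℕ) : ℤ) := by
    intro j hj
    rw [tN, if_pos hj, sum_wgt a b (Finset.Icc 1 (i - 2))
      (by simp only [Finset.mem_Icc]; omega)
      (by simp only [Finset.mem_Icc]; omega), Nat.card_Icc]
    congr 1
  -- evaluate the generic factors
  have hfact1 : ∀ j, 2 ≤ j → j ≤ n → ¬(j = i - 1 ∨ j = i) →
      ∑ x ∈ tN i j, wgtL a b x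
        = a + b + (((if j < i - 1 then j - 2 else j - 4) : ℕ) : ℤ) := by
    intro j h2 hn' hne
    rw [tN, if_neg hne, Finset.sum_insert (by
      simp only [Finset.mem_filter, Finset.mem_Icc]
      omega)]
    rw [sum_wgt a b ((Finset.Icc 1 (j - 1)).filter (fun x => x ≠ i - 1 ∧ x ≠ i))
      (by
        simp only [Finset.mem_filter, Finset.mem_Icc]
        omega)
      (by simp only [Finset.mem_filter, Finset.mem_Icc]; omega)]
    have hcard : ((Finset.Icc 1 (j - 1)).filter
        (fun x => x ≠ i - 1 ∧ x ≠ i)).card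
        = if j < i - 1 then j - 1 else j - 3 := by
      by_cases hlt : j < i - 1
      · rw [if_pos hlt, Finset.filter_true_of_mem (fun x hx => by
          simp only [Finset.mem_Icc] at hx
          omega), Nat.card_Icc]
        omega
      · rw [if_neg hlt]
        have hset : (Finset.Icc 1 (j - 1)).filter (fun x => x ≠ i - 1 ∧ x ≠ i)
            = Finset.Icc 1 (j - 1) \ {i - 1, i} := by
          ext x
          simp only [Finset.mem_filter, Finset.mem_sdiff, Finset.mem_insert,
            Finset.mem_singleton]
          tauto
        rw [hset, Finset.card_sdiff_of_subset (by
          intro x hx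
          simp only [Finset.mem_insert, Finset.mem_singleton] at hx
          simp only [Finset.mem_Icc]
          omega)]
        rw [Nat.card_Icc]
        have hc2 : ({i - 1, i} : Finset ℕ).card = 2 := by
          rw [Finset.card_insert_of_notMem (by
            simp only [Finset.mem_singleton]; omega), Finset.card_singleton]
        rw [hc2]
        omega
    rw [hcard]
    have hw0 : wgtL a b 0 = b := by simp [wgtL]
    rw [hw0]
    split_ifs with hlt
    · rw [show (j - 1 - 1 : ℕ) = j - 2 from by omega]
      ring
    · rw [show (j - 3 - 1 : ℕ) = j - 4 from by omega]
      ring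
  -- split off the two special factors
  rw [← Finset.prod_filter_mul_prod_filter_not (Finset.Icc 2 n)
    (fun j => j = i - 1 ∨ j = i)]
  have hsplit : (Finset.Icc 2 n).filter (fun j => j = i - 1 ∨ j = i)
      = {i - 1, i} := by
    ext j
    simp only [Finset.mem_filter, Finset.mem_Icc, Finset.mem_insert,
      Finset.mem_singleton]
    omega
  rw [hsplit, Finset.prod_pair (show i - 1 ≠ i by omega),
    hfact2 (i - 1) (Or.inl rfl), hfact2 i (Or.inr rfl)]
  -- reindex the remaining product
  have hprod1 : ∏ j ∈ (Finset.Icc 2 n).filter (fun j => ¬(j = i - 1 ∨ j = i)),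
      ∑ x ∈ tN i j, wgtL a b x
      = ∏ k ∈ Finset.range (n - 3), (a + b + (k : ℤ)) := by
    refine Finset.prod_nbij' (fun j => if j < i - 1 then j - 2 else j - 4)
      (fun k => if k + 3 < i then k + 2 else k + 4) ?_ ?_ ?_ ?_ ?_
    · intro j hj
      simp only [Finset.mem_filter, Finset.mem_Icc] at hj
      simp only [Finset.mem_range]
      split_ifs <;> omega
    · intro k hk
      simp only [Finset.mem_range] at hk
      simp only [Finset.mem_filter, Finset.mem_Icc]
      split_ifs <;> omega
    · intro j hj
      simp only [Finset.mem_filter, Finset.mem_Icc] at hj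
      split_ifs <;> omega
    · intro k hk
      simp only [Finset.mem_range] at hk
      split_ifs <;> omega
    · intro j hj
      simp only [Finset.mem_filter, Finset.mem_Icc] at hj
      exact hfact1 j hj.1.1 hj.1.2 hj.2
  rw [hprod1, poch_eval_prod]
  have hc : ((i - 3 : ℕ) : ℤ) = (i : ℤ) - 3 := by omega
  rw [hc]
  ring
end

section
/- There is a bijection between symmetric alternative tableaux of size 2n and type B alternative tableaux of size n, obtained by deleting all cells strictly to the right of the main diagonal; it preserves the number of unrestricted rows, and sends the number of non-occupied corners of the symmetric tableau to noc'(T') + 2·noc''(T'), where noc'(T') counts non-occupied diagonal corners of the type B tableau and noc''(T') counts the remaining non-occupied corners. -/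
open Finset Polynomial
open scoped Classical

/-!
Renumber the border labels `1, …, 2n` of a symmetric diagram as `-n, …, -1, 1, …, n`. Then the
reflection `k ↦ 2n + 1 - k` becomes `x ↦ -x`, the mirror image of a cell `(x, y)` is `(-y, -x)`,
and a cell lies strictly to the left of the main diagonal iff `x + y > 0`. In these labels the
cells left of the diagonal are exactly the off-diagonal cells of the shifted diagram whose columns
are the positive column labels: the row `-c` is the mirror image of the column `c`. So cutting
along the diagonal is inverted by unfolding, which takes as left arrows those of the type B
tableau together with the mirror images of its up arrows. A mirrored up arrow of column `i` is a
left arrow in row `-i`, and the alternative tableau rule for it is exactly the type B condition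
that row `-i` is empty.

A left arrow of a row `r` that lies right of the diagonal mirrors to an up arrow of column `|r|`
left of it, which accounts for the two clauses defining unrestricted rows of a type B tableau.
The empty corners `(c - 1, c)` of the symmetric tableau come in mirror pairs `c ↔ 2n + 2 - c`,
except for the diagonal corner `c = n + 1`, which corresponds to the diagonal corner `(-1, 1)`.
-/

namespace SymATB

variable {n : ℕ} {C : Finset ℕ} {L U : Finset (ℕ × ℕ)} {C' : Finset ℤ}
  {L' U' : Finset (ℤ × ℤ)}

def signedLabel (n k : ℕ) : ℤ := if k ≤ n then k - (n + 1) else k - n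

lemma signedLabel_strictMono (n : ℕ) : StrictMono (signedLabel n) := by
  intro a b h
  simp only [signedLabel]
  split_ifs <;> omega

lemma signedLabel_injective (n : ℕ) : Function.Injective (signedLabel n) :=
  (signedLabel_strictMono n).injective

lemma signedLabel_lt_signedLabel {a b : ℕ} : signedLabel n a < signedLabel n b ↔ a < b :=
  (signedLabel_strictMono n).lt_iff_lt

lemma signedLabel_pos {k : ℕ} : 0 < signedLabel n k ↔ n < k := by
  simp only [signedLabel]
  split_ifs <;> omega

lemma signedLabel_neg {k : ℕ} : signedLabel n k < 0 ↔ k ≤ n := by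
  simp only [signedLabel]
  split_ifs <;> omega

lemma signedLabel_of_lt {k : ℕ} (h : n < k) : signedLabel n k = k - n := by
  simp only [signedLabel, if_neg h.not_ge]

lemma signedLabel_reflect {k : ℕ} (hk : k ≤ 2 * n + 1) :
    signedLabel n (2 * n + 1 - k) = -signedLabel n k := by
  simp only [signedLabel]
  split_ifs <;> omega

lemma signedLabel_add_pos {a b : ℕ} :
    0 < signedLabel n a + signedLabel n b ↔ 2 * n + 1 < a + b := by
  simp only [signedLabel]
  split_ifs <;> omega

lemma exists_signedLabel_eq {x : ℤ} (h0 : x ≠ 0) (h : -n ≤ x ∧ x ≤ n) :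
    ∃ k ∈ Icc 1 (2 * n), signedLabel n k = x := by
  refine ⟨(if x < 0 then x + (n + 1) else x + n).toNat, ?_, ?_⟩
  · simp only [mem_Icc]
    split_ifs <;> omega
  · simp only [signedLabel]
    split_ifs <;> omega

def signCell (n : ℕ) : ℕ × ℕ → ℤ × ℤ := Prod.map (signedLabel n) (signedLabel n)

@[simp] lemma signCell_fst (p : ℕ × ℕ) : (signCell n p).1 = signedLabel n p.1 := rfl

@[simp] lemma signCell_snd (p : ℕ × ℕ) : (signCell n p).2 = signedLabel n p.2 := rfl

lemma signCell_injective (n : ℕ) : Function.Injective (signCell n) :=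
  (signedLabel_injective n).prodMap (signedLabel_injective n)

def reflect (n : ℕ) (p : ℕ × ℕ) : ℕ × ℕ := (2 * n + 1 - p.2, 2 * n + 1 - p.1)

lemma reflect_reflect {p : ℕ × ℕ} (h1 : p.1 ≤ 2 * n + 1) (h2 : p.2 ≤ 2 * n + 1) :
    reflect n (reflect n p) = p := by
  ext <;> simp only [reflect] <;> omega

lemma reflect_mem_box {p : ℕ × ℕ} :
    reflect n p ∈ Icc 1 (2 * n) ×ˢ Icc 1 (2 * n) ↔
      p ∈ Icc 1 (2 * n) ×ˢ Icc 1 (2 * n) := by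
  simp only [reflect, mem_product, mem_Icc]
  omega

def negSwap (q : ℤ × ℤ) : ℤ × ℤ := (-q.2, -q.1)

lemma negSwap_negSwap (q : ℤ × ℤ) : negSwap (negSwap q) = q := by
  simp [negSwap]

lemma signCell_reflect {p : ℕ × ℕ} (hp : p ∈ Icc 1 (2 * n) ×ˢ Icc 1 (2 * n)) :
    signCell n (reflect n p) = negSwap (signCell n p) := by
  simp only [mem_product, mem_Icc] at hp
  simp only [reflect, signCell, negSwap, Prod.map, signedLabel_reflect (by omega : p.1 ≤ 2 * n + 1),
    signedLabel_reflect (by omega : p.2 ≤ 2 * n + 1)]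

def IsCell (m : ℕ) (C : Finset ℕ) (p : ℕ × ℕ) : Prop :=
  1 ≤ p.1 ∧ p.1 < p.2 ∧ p.2 ≤ m ∧ p.1 ∉ C ∧ p.2 ∈ C

lemma IsAT.cell {m : ℕ} (hA : IsAT m C L U)
    {p : ℕ × ℕ} (hp : p ∈ L ∪ U) : IsCell m C p := by
  obtain ⟨h1, h2, h3, h4⟩ := hA.2.2.1 p hp
  exact ⟨(mem_Icc.1 h1).1, h4, (mem_Icc.1 (hA.1 h3)).2, h2, h3⟩

lemma IsCell.reflect (hC : ∀ k ∈ Icc 1 (2 * n), k ∈ C ↔ 2 * n + 1 - k ∉ C)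
    {p : ℕ × ℕ} (hp : IsCell (2 * n) C p) : IsCell (2 * n) C (reflect n p) := by
  obtain ⟨h1, h12, h2, hrow, hcol⟩ := hp
  have hcol' := (hC p.2 (mem_Icc.2 ⟨by omega, h2⟩)).1 hcol
  have hrow' := (hC p.1 (mem_Icc.2 ⟨h1, by omega⟩)).not.1 hrow
  simp only [IsCell, SymATB.reflect]
  exact ⟨by omega, by omega, by omega, hcol', not_not.1 hrow'⟩

lemma IsSymAT.reflect_mem_U (hS : IsSymAT n C L U) {p : ℕ × ℕ} (hp : p ∈ L) :
    reflect n p ∈ U :=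
  (hS.2 p.1 p.2).1 hp

lemma IsSymAT.reflect_mem_L (hS : IsSymAT n C L U) {p : ℕ × ℕ} (hp : p ∈ U)
    (h1 : p.1 ≤ 2 * n + 1) (h2 : p.2 ≤ 2 * n + 1) : reflect n p ∈ L := by
  refine (hS.2 _ _).2 ?_
  convert hp using 1
  ext <;> dsimp only <;> omega

lemma IsSymAT.reflect_mem (hS : IsSymAT n C L U) {p : ℕ × ℕ} (hp : p ∈ L ∪ U)
    (h1 : p.1 ≤ 2 * n + 1) (h2 : p.2 ≤ 2 * n + 1) : reflect n p ∈ L ∪ U := by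
  rcases mem_union.1 hp with h | h
  · exact mem_union_right L (IsSymAT.reflect_mem_U hS h)
  · exact mem_union_left U (IsSymAT.reflect_mem_L hS h h1 h2)

lemma IsSymAT.add_ne_of_mem (hS : IsSymAT n C L U) (hA : IsAT (2 * n) C L U)
    {p : ℕ × ℕ} (hp : p ∈ L ∪ U) : p.1 + p.2 ≠ 2 * n + 1 := by
  intro hdiag
  obtain ⟨-, -, h2, -⟩ := IsAT.cell hA hp
  have hfix : reflect n p = p := by ext <;> simp only [reflect] <;> omega
  rcases mem_union.1 hp with h | h
  · exact disjoint_left.1 hA.2.1 h (hfix ▸ IsSymAT.reflect_mem_U hS h)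
  · exact disjoint_left.1 hA.2.1 (hfix ▸ IsSymAT.reflect_mem_L hS h (by omega) (by omega)) h

lemma isAT_of_isSymAT (hC : C ⊆ Icc 1 (2 * n))
    (hS : IsSymAT n C L U) (hLU : Disjoint L U) (hcell : ∀ p ∈ L ∪ U, IsCell (2 * n) C p)
    (hleft : ∀ p ∈ L, ∀ c : ℕ, p.2 < c → (p.1, c) ∉ L ∪ U) : IsAT (2 * n) C L U := by
  refine ⟨hC, hLU, fun p hp => ?_, hleft, fun p hp r hr hmem => ?_⟩
  · obtain ⟨h1, h12, h2, hrow, hcol⟩ := hcell p hp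
    exact ⟨mem_Icc.2 ⟨h1, by omega⟩, hrow, hcol, h12⟩
  · obtain ⟨-, hp12, hp2, -⟩ := hcell p (mem_union_right L hp)
    obtain ⟨-, hr2, -⟩ := hcell _ hmem
    refine hleft _ (IsSymAT.reflect_mem_L hS hp (by omega) (by omega)) (2 * n + 1 - r) ?_
      (IsSymAT.reflect_mem hS hmem (by omega) (by omega))
    simp only [SymATB.reflect]
    omega

lemma IsATB.cell (hB : IsATB n C' L' U') {q : ℤ × ℤ} (hq : q ∈ L' ∪ U') :
    q.2 ∈ C' ∧ q.2 ≤ n ∧ -n ≤ q.1 ∧ q.1 < q.2 ∧ 0 < q.1 + q.2 ∧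
      (0 < q.1 ∧ q.1 ∉ C' ∨ q.1 < 0 ∧ -q.1 ∈ C') := by
  obtain ⟨hcol, hrow⟩ := hB.2.2.1 q hq
  have hcol' := mem_Icc.1 (hB.1 hcol)
  rcases hrow with ⟨h1, -, hnot, h12⟩ | ⟨h1, hin, h12⟩
  · exact ⟨hcol, hcol'.2, by omega, h12, by omega, Or.inl ⟨h1, hnot⟩⟩
  · have := mem_Icc.1 (hB.1 hin)
    exact ⟨hcol, hcol'.2, by omega, by omega, by omega, Or.inr ⟨h1, hin⟩⟩

lemma IsATB.negSwap_not_mem (hB : IsATB n C' L' U') {q : ℤ × ℤ} (hq : 0 ≤ q.1 + q.2) :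
    negSwap q ∉ L' ∪ U' := by
  intro h
  have := (IsATB.cell hB h).2.2.2.2.1
  simp only [negSwap] at this
  omega

/-- A cell `(r, c)` lies on the main diagonal iff `r + c = 2n + 1`, and strictly to its left
iff `r + c > 2n + 1`. -/
def keptPart (n : ℕ) (X : Finset (ℕ × ℕ)) : Finset (ℤ × ℤ) :=
  (X.filter fun p => 2 * n + 1 < p.1 + p.2).image (signCell n)

lemma mem_keptPart {X : Finset (ℕ × ℕ)} {q : ℤ × ℤ} :
    q ∈ keptPart n X ↔ ∃ p ∈ X, 2 * n + 1 < p.1 + p.2 ∧ signCell n p = q := by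
  simp only [keptPart, mem_image, mem_filter, and_assoc]

lemma signCell_mem_keptPart {X : Finset (ℕ × ℕ)} {p : ℕ × ℕ} :
    signCell n p ∈ keptPart n X ↔ p ∈ X ∧ 2 * n + 1 < p.1 + p.2 := by
  rw [keptPart, (signCell_injective n).mem_finset_image, mem_filter]

lemma keptPart_union (X Y : Finset (ℕ × ℕ)) :
    keptPart n (X ∪ Y) = keptPart n X ∪ keptPart n Y := by
  rw [keptPart, filter_union, image_union, keptPart, keptPart]

def toATB (n : ℕ) (T : Finset ℕ × Finset (ℕ × ℕ) × Finset (ℕ × ℕ)) :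
    Finset ℤ × Finset (ℤ × ℤ) × Finset (ℤ × ℤ) :=
  ((T.1.filter (n < ·)).image (signedLabel n), keptPart n T.2.1, keptPart n T.2.2)

lemma signedLabel_mem_toATB {k : ℕ} :
    signedLabel n k ∈ (toATB n (C, L, U)).1 ↔ k ∈ C ∧ n < k := by
  rw [toATB, (signedLabel_injective n).mem_finset_image, mem_filter]

lemma toATB_arrows :
    (toATB n (C, L, U)).2.1 ∪ (toATB n (C, L, U)).2.2 = keptPart n (L ∪ U) :=
  (keptPart_union L U).symm

lemma mem_toATB_arrows {q : ℤ × ℤ} :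
    q ∈ (toATB n (C, L, U)).2.1 ∪ (toATB n (C, L, U)).2.2 ↔
      ∃ p ∈ L ∪ U, 2 * n + 1 < p.1 + p.2 ∧ signCell n p = q := by
  rw [toATB_arrows, mem_keptPart]

lemma signCell_mem_toATB_arrows {p : ℕ × ℕ} :
    signCell n p ∈ (toATB n (C, L, U)).2.1 ∪ (toATB n (C, L, U)).2.2 ↔
      p ∈ L ∪ U ∧ 2 * n + 1 < p.1 + p.2 := by
  rw [toATB_arrows, signCell_mem_keptPart]

lemma toATB_fst_subset (hA : IsAT (2 * n) C L U) : (toATB n (C, L, U)).1 ⊆ Icc 1 (n : ℤ) := by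
  intro x hx
  simp only [toATB, mem_image, mem_filter] at hx
  obtain ⟨c, ⟨hc, hnc⟩, rfl⟩ := hx
  have := mem_Icc.1 (hA.1 hc)
  rw [signedLabel_of_lt hnc, mem_Icc]
  omega

def IsOffDiagCellB (n : ℕ) (C' : Finset ℤ) (q : ℤ × ℤ) : Prop :=
  q.2 ∈ C' ∧ ((1 ≤ q.1 ∧ q.1 ≤ n ∧ q.1 ∉ C' ∧ q.1 < q.2) ∨
    (q.1 < 0 ∧ -q.1 ∈ C' ∧ -q.1 < q.2))

lemma isOffDiagCellB_signCell (hA : IsAT (2 * n) C L U) (hS : IsSymAT n C L U) {p : ℕ × ℕ}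
    (hp : p ∈ L ∪ U) (hkeep : 2 * n + 1 < p.1 + p.2) :
    IsOffDiagCellB n (toATB n (C, L, U)).1 (signCell n p) := by
  obtain ⟨h1, hp12, h2, hrow, hcol⟩ := IsAT.cell hA hp
  refine ⟨signedLabel_mem_toATB.2 ⟨hcol, by omega⟩, ?_⟩
  simp only [signCell_fst, signCell_snd, signedLabel_lt_signedLabel, hp12, and_true]
  by_cases hpos : n < p.1
  · left
    have hnot : signedLabel n p.1 ∉ (toATB n (C, L, U)).1 :=
      signedLabel_mem_toATB.not.2 (fun h => hrow h.1)
    rw [signedLabel_of_lt hpos] at hnot ⊢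
    exact ⟨by omega, by omega, hnot⟩
  · right
    have hrefl : 2 * n + 1 - p.1 ∈ C :=
      not_not.1 ((hS.1 p.1 (mem_Icc.2 ⟨h1, by omega⟩)).not.1 hrow)
    refine ⟨signedLabel_neg.2 (not_lt.1 hpos), ?_, ?_⟩
    · rw [← signedLabel_reflect (by omega)]
      exact signedLabel_mem_toATB.2 ⟨hrefl, by omega⟩
    · have := signedLabel_add_pos.2 hkeep
      linarith

theorem isATB_toATB (hA : IsAT (2 * n) C L U) (hS : IsSymAT n C L U) :
    IsATB n (toATB n (C, L, U)).1 (toATB n (C, L, U)).2.1 (toATB n (C, L, U)).2.2 := by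
  refine ⟨toATB_fst_subset hA, ?disj, ?cells, ?left, ?up, ?typeB⟩
  case disj =>
    exact (disjoint_image (signCell_injective n)).2 (disjoint_filter_filter hA.2.1)
  case cells =>
    intro q hq
    obtain ⟨p, hp, hkeep, rfl⟩ := mem_toATB_arrows.1 hq
    exact isOffDiagCellB_signCell hA hS hp hkeep
  case left =>
    intro q hq c' hc' hmem
    obtain ⟨a, ha, -, rfl⟩ := mem_keptPart.1 hq
    obtain ⟨b, hb, -, hba⟩ := mem_toATB_arrows.1 hmem
    obtain ⟨hb1, hb2⟩ := Prod.ext_iff.1 hba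
    simp only [signCell_fst, signCell_snd] at hb1 hb2
    have hrow : b.1 = a.1 := signedLabel_injective n hb1
    have hcol : a.2 < b.2 := signedLabel_lt_signedLabel.1 (hb2 ▸ hc')
    exact hA.2.2.2.1 a ha b.2 hcol (hrow ▸ hb)
  case up =>
    intro q hq x' hx' hmem
    obtain ⟨a, ha, -, rfl⟩ := mem_keptPart.1 hq
    obtain ⟨b, hb, -, hba⟩ := mem_toATB_arrows.1 hmem
    obtain ⟨hb1, hb2⟩ := Prod.ext_iff.1 hba
    simp only [signCell_fst, signCell_snd] at hb1 hb2
    have hcol : b.2 = a.2 := signedLabel_injective n hb2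
    have hrow : b.1 < a.1 := signedLabel_lt_signedLabel.1 (hb1 ▸ hx')
    exact hA.2.2.2.2 a ha b.1 hrow (hcol ▸ hb)
  case typeB =>
    rintro i - ⟨q, hq, rfl⟩ c' hmem
    obtain ⟨a, ha, hakeep, rfl⟩ := mem_keptPart.1 hq
    obtain ⟨b, hb, hbkeep, hba⟩ := mem_toATB_arrows.1 hmem
    obtain ⟨hb1, -⟩ := Prod.ext_iff.1 hba
    obtain ⟨-, ha12, ha2, -⟩ := IsAT.cell hA (mem_union_right L ha)
    rw [signCell_snd, ← signedLabel_reflect (by omega)] at hb1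
    have hrow : b.1 = (reflect n a).1 := signedLabel_injective n hb1
    have hcol : (reflect n a).2 < b.2 := by simp only [reflect] at hrow ⊢; omega
    exact hA.2.2.2.1 _ (IsSymAT.reflect_mem_L hS ha (by omega) (by omega)) b.2 hcol (hrow ▸ hb)

def unfold (n : ℕ) (X Y : Finset (ℤ × ℤ)) : Finset (ℕ × ℕ) :=
  (Icc 1 (2 * n) ×ˢ Icc 1 (2 * n)).filter
    fun p => signCell n p ∈ X ∨ negSwap (signCell n p) ∈ Y

lemma mem_unfold {X Y : Finset (ℤ × ℤ)} {p : ℕ × ℕ} :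
    p ∈ unfold n X Y ↔ p ∈ Icc 1 (2 * n) ×ˢ Icc 1 (2 * n) ∧
      (signCell n p ∈ X ∨ negSwap (signCell n p) ∈ Y) :=
  mem_filter

lemma reflect_mem_unfold {X Y : Finset (ℤ × ℤ)} {p : ℕ × ℕ} :
    reflect n p ∈ unfold n Y X ↔ p ∈ unfold n X Y := by
  rw [mem_unfold, mem_unfold, reflect_mem_box]
  by_cases hp : p ∈ Icc 1 (2 * n) ×ˢ Icc 1 (2 * n)
  · rw [signCell_reflect hp, negSwap_negSwap]
    tauto
  · simp only [hp, false_and]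

def ofATB (n : ℕ) (T : Finset ℤ × Finset (ℤ × ℤ) × Finset (ℤ × ℤ)) :
    Finset ℕ × Finset (ℕ × ℕ) × Finset (ℕ × ℕ) :=
  ((Icc 1 (2 * n)).filter
      (fun k => if n < k then signedLabel n k ∈ T.1 else -signedLabel n k ∉ T.1),
    unfold n T.2.1 T.2.2, unfold n T.2.2 T.2.1)

lemma mem_ofATB_fst {k : ℕ} : k ∈ (ofATB n (C', L', U')).1 ↔ k ∈ Icc 1 (2 * n) ∧
    if n < k then signedLabel n k ∈ C' else -signedLabel n k ∉ C' :=
  mem_filter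

lemma mem_ofATB_arrows {p : ℕ × ℕ} :
    p ∈ (ofATB n (C', L', U')).2.1 ∪ (ofATB n (C', L', U')).2.2 ↔
      p ∈ Icc 1 (2 * n) ×ˢ Icc 1 (2 * n) ∧
        (signCell n p ∈ L' ∪ U' ∨ negSwap (signCell n p) ∈ L' ∪ U') := by
  simp only [ofATB, mem_union, mem_unfold]
  tauto

theorem isSymAT_ofATB (T : Finset ℤ × Finset (ℤ × ℤ) × Finset (ℤ × ℤ)) :
    IsSymAT n (ofATB n T).1 (ofATB n T).2.1 (ofATB n T).2.2 := by
  constructor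
  · intro k hk
    have hk' : 2 * n + 1 - k ∈ Icc 1 (2 * n) := by simp only [mem_Icc] at hk ⊢; omega
    simp only [ofATB, mem_filter, hk, hk', true_and,
      signedLabel_reflect (by simp only [mem_Icc] at hk; omega : k ≤ 2 * n + 1), neg_neg]
    by_cases h : n < k
    · rw [if_pos h, if_neg (by omega), not_not]
    · rw [if_neg h, if_pos (by omega)]
  · exact fun r c => reflect_mem_unfold.symm

lemma isCell_ofATB (hB : IsATB n C' L' U') {p : ℕ × ℕ}
    (hp : p ∈ Icc 1 (2 * n) ×ˢ Icc 1 (2 * n)) (ha : signCell n p ∈ L' ∪ U') :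
    IsCell (2 * n) (ofATB n (C', L', U')).1 p := by
  obtain ⟨hcol, -, -, h12, -, hrow⟩ := IsATB.cell hB ha
  have hbox := hp
  simp only [mem_product, mem_Icc] at hbox
  have hcol_pos : n < p.2 := signedLabel_pos.1 (mem_Icc.1 (hB.1 hcol)).1
  refine ⟨hbox.1.1, signedLabel_lt_signedLabel.1 h12, hbox.2.2, ?_,
    mem_ofATB_fst.2 ⟨(mem_product.1 hp).2, by rw [if_pos hcol_pos]; exact hcol⟩⟩
  rw [mem_ofATB_fst, not_and]
  intro _
  rcases hrow with ⟨hpos, hnot⟩ | ⟨hneg, hin⟩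
  · rw [if_pos (signedLabel_pos.1 hpos)]
    exact hnot
  · rw [if_neg (by rw [← signedLabel_pos]; simp only [signCell_fst] at hneg; omega)]
    exact not_not.2 hin

lemma ofATB_left (hB : IsATB n C' L' U') :
    ∀ p ∈ (ofATB n (C', L', U')).2.1, ∀ c : ℕ, p.2 < c →
      (p.1, c) ∉ (ofATB n (C', L', U')).2.1 ∪ (ofATB n (C', L', U')).2.2 := by
  intro p hp c hc hmem
  obtain ⟨-, hp⟩ := mem_unfold.1 hp
  obtain ⟨-, hq⟩ := mem_ofATB_arrows.1 hmem
  have hlt : (signCell n p).2 < signedLabel n c := signedLabel_lt_signedLabel.2 hc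
  change signCell n p ∈ L' ∨ _ at hp
  change (signedLabel n p.1, signedLabel n c) ∈ L' ∪ U' ∨
    negSwap (signedLabel n p.1, signedLabel n c) ∈ L' ∪ U' at hq
  rcases hp with ha | ha <;> rcases hq with hb | hb
  · exact hB.2.2.2.1 _ ha _ hlt hb
  · have := (IsATB.cell hB (mem_union_left U' ha)).2.2.2.2.1
    simp only [signCell_fst, signCell_snd] at this hlt
    exact IsATB.negSwap_not_mem hB (by dsimp only; omega) hb
  · have hcol := (IsATB.cell hB (mem_union_right L' ha)).1
    exact hB.2.2.2.2.2 _ hcol ⟨_, ha, rfl⟩ (signedLabel n c) (by rwa [negSwap, neg_neg])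
  · exact hB.2.2.2.2.1 _ ha (-signedLabel n c) (by simp only [negSwap]; omega) hb

theorem isAT_ofATB (hB : IsATB n C' L' U') :
    IsAT (2 * n) (ofATB n (C', L', U')).1 (ofATB n (C', L', U')).2.1
      (ofATB n (C', L', U')).2.2 := by
  refine isAT_of_isSymAT (filter_subset _ _) (isSymAT_ofATB _) ?_ ?_ (ofATB_left hB)
  · refine disjoint_left.2 fun p hL hU => ?_
    obtain ⟨-, hL⟩ := mem_unfold.1 hL
    obtain ⟨-, hU⟩ := mem_unfold.1 hU
    have hkept {q : ℤ × ℤ} (hq : q ∈ L' ∪ U') : negSwap q ∉ L' ∪ U' :=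
      IsATB.negSwap_not_mem hB (IsATB.cell hB hq).2.2.2.2.1.le
    rcases hL with h1 | h1 <;> rcases hU with h2 | h2
    · exact disjoint_left.1 hB.2.1 h1 h2
    · exact hkept (mem_union_left U' h1) (mem_union_left U' h2)
    · exact hkept (mem_union_right L' h2) (mem_union_right L' h1)
    · exact disjoint_left.1 hB.2.1 h2 h1
  · intro p hp
    obtain ⟨hbox, ha | ha⟩ := mem_ofATB_arrows.1 hp
    · exact isCell_ofATB hB hbox ha
    · rw [← signCell_reflect hbox] at ha
      have := (isCell_ofATB hB (reflect_mem_box.2 hbox) ha).reflect (isSymAT_ofATB _).1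
      simp only [mem_product, mem_Icc] at hbox
      rwa [reflect_reflect (by omega) (by omega)] at this

lemma exists_signCell_eq (hB : IsATB n C' L' U') {q : ℤ × ℤ} (hq : q ∈ L' ∪ U') :
    ∃ p ∈ Icc 1 (2 * n) ×ˢ Icc 1 (2 * n), signCell n p = q := by
  obtain ⟨hcol, hcol_le, hrow_ge, h12, hsum, hrow⟩ := IsATB.cell hB hq
  have := mem_Icc.1 (hB.1 hcol)
  have hrow_ne : q.1 ≠ 0 := by rcases hrow with ⟨h, -⟩ | ⟨h, -⟩ <;> omega
  obtain ⟨r, hr, hr_eq⟩ := exists_signedLabel_eq (n := n) (x := q.1) hrow_ne (by omega)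
  obtain ⟨c, hc, hc_eq⟩ := exists_signedLabel_eq (n := n) (x := q.2) (by omega) (by omega)
  exact ⟨(r, c), mem_product.2 ⟨hr, hc⟩, Prod.ext hr_eq hc_eq⟩

lemma keptPart_unfold (hB : IsATB n C' L' U') {X Y : Finset (ℤ × ℤ)} (hX : X ⊆ L' ∪ U')
    (hY : Y ⊆ L' ∪ U') : keptPart n (unfold n X Y) = X := by
  ext q
  rw [mem_keptPart]
  constructor
  · rintro ⟨p, hp, hkept, rfl⟩
    obtain ⟨-, hpX | hpY⟩ := mem_unfold.1 hp
    · exact hpX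
    · exact absurd (hY hpY) (IsATB.negSwap_not_mem hB (signedLabel_add_pos.2 hkept).le)
  · intro hq
    obtain ⟨p, hp, rfl⟩ := exists_signCell_eq hB (hX hq)
    exact ⟨p, mem_unfold.2 ⟨hp, Or.inl hq⟩,
      signedLabel_add_pos.1 (IsATB.cell hB (hX hq)).2.2.2.2.1, rfl⟩

theorem toATB_ofATB (hB : IsATB n C' L' U') : toATB n (ofATB n (C', L', U')) = (C', L', U') := by
  refine Prod.ext ?_ (Prod.ext (keptPart_unfold hB subset_union_left subset_union_right)
    (keptPart_unfold hB subset_union_right subset_union_left))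
  ext x
  simp only [toATB, mem_image, mem_filter, mem_ofATB_fst]
  constructor
  · rintro ⟨k, ⟨⟨-, hk⟩, hnk⟩, rfl⟩
    rwa [if_pos hnk] at hk
  · intro hx
    have := mem_Icc.1 (hB.1 hx)
    obtain ⟨k, hk, rfl⟩ := exists_signedLabel_eq (n := n) (x := x) (by omega) (by omega)
    have hnk : n < k := signedLabel_pos.1 (by omega)
    exact ⟨k, ⟨⟨hk, by rwa [if_pos hnk]⟩, hnk⟩, rfl⟩

lemma unfold_keptPart {X Y : Finset (ℕ × ℕ)} (hX : X ⊆ Icc 1 (2 * n) ×ˢ Icc 1 (2 * n))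
    (hXY : ∀ p ∈ Icc 1 (2 * n) ×ˢ Icc 1 (2 * n), p ∈ X ↔ reflect n p ∈ Y)
    (hdiag : ∀ p ∈ X, p.1 + p.2 ≠ 2 * n + 1) :
    unfold n (keptPart n X) (keptPart n Y) = X := by
  ext p
  rw [mem_unfold]
  by_cases hp : p ∈ Icc 1 (2 * n) ×ˢ Icc 1 (2 * n)
  · rw [← signCell_reflect hp, signCell_mem_keptPart, signCell_mem_keptPart, ← hXY p hp]
    have hbox := hp
    simp only [mem_product, mem_Icc] at hbox
    simp only [SymATB.reflect]
    constructor
    · rintro ⟨-, ⟨h, -⟩ | ⟨h, -⟩⟩ <;> exact h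
    · intro h
      have := hdiag p h
      by_cases hkept : 2 * n + 1 < p.1 + p.2
      · exact ⟨hp, Or.inl ⟨h, hkept⟩⟩
      · exact ⟨hp, Or.inr ⟨h, by omega⟩⟩
  · exact iff_of_false (fun h => hp h.1) (fun h => hp (hX h))

theorem ofATB_toATB (hA : IsAT (2 * n) C L U) (hS : IsSymAT n C L U) :
    ofATB n (toATB n (C, L, U)) = (C, L, U) := by
  have hbox {p : ℕ × ℕ} (hp : p ∈ L ∪ U) : p ∈ Icc 1 (2 * n) ×ˢ Icc 1 (2 * n) := by
    obtain ⟨h1, h12, h2, -⟩ := IsAT.cell hA hp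
    simp only [mem_product, mem_Icc]
    omega
  have hdiag {p : ℕ × ℕ} (hp : p ∈ L ∪ U) := IsSymAT.add_ne_of_mem hS hA hp
  refine Prod.ext ?_ (Prod.ext ?_ ?_)
  · ext k
    rw [mem_ofATB_fst]
    by_cases hk : k ∈ Icc 1 (2 * n)
    · have hk' := mem_Icc.1 hk
      by_cases hnk : n < k
      · rw [if_pos hnk, signedLabel_mem_toATB]
        simp [hk, hnk]
      · rw [if_neg hnk, ← signedLabel_reflect (by omega), signedLabel_mem_toATB, hS.1 k hk]
        simp only [hk, true_and]
        constructor
        · intro h h'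
          exact h ⟨h', by omega⟩
        · intro h h'
          exact h h'.1
    · exact iff_of_false (fun h => hk h.1) (fun h => hk (hA.1 h))
  · exact unfold_keptPart (fun p hp => hbox (mem_union_left U hp)) (fun p _ => hS.2 p.1 p.2)
      (fun p hp => hdiag (mem_union_left U hp))
  · refine unfold_keptPart (fun p hp => hbox (mem_union_right L hp)) (fun p hp => ?_)
      (fun p hp => hdiag (mem_union_right L hp))
    have hp' := hp
    simp only [mem_product, mem_Icc] at hp'
    constructor
    · intro h
      exact IsSymAT.reflect_mem_L hS h (by omega) (by omega)
    · intro h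
      have := IsSymAT.reflect_mem_U hS h
      rwa [reflect_reflect (by omega) (by omega)] at this

lemma rowsB_toATB (hA : IsAT (2 * n) C L U) (hS : IsSymAT n C L U) :
    rowsB n (toATB n (C, L, U)).1 = (Icc 1 (2 * n) \ C).image (signedLabel n) := by
  ext x
  simp only [rowsB, mem_union, mem_sdiff, mem_image]
  constructor
  · rintro (⟨hx, hxC⟩ | ⟨c, hc, rfl⟩)
    · have := mem_Icc.1 hx
      obtain ⟨k, hk, rfl⟩ := exists_signedLabel_eq (n := n) (x := x) (by omega) (by omega)
      refine ⟨k, ⟨hk, fun h => hxC ?_⟩, rfl⟩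
      exact signedLabel_mem_toATB.2 ⟨h, signedLabel_pos.1 (by omega)⟩
    · simp only [toATB, mem_image, mem_filter] at hc
      obtain ⟨c, ⟨hc, hnc⟩, rfl⟩ := hc
      have hc' := mem_Icc.1 (hA.1 hc)
      exact ⟨2 * n + 1 - c, ⟨mem_Icc.2 ⟨by omega, by omega⟩, (hS.1 c (hA.1 hc)).1 hc⟩,
        signedLabel_reflect (by omega)⟩
  · rintro ⟨r, ⟨hr, hrC⟩, rfl⟩
    have hr' := mem_Icc.1 hr
    by_cases hnr : n < r
    · left
      refine ⟨?_, signedLabel_mem_toATB.not.2 fun h => hrC h.1⟩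
      rw [signedLabel_of_lt hnr, mem_Icc]
      omega
    · right
      refine ⟨signedLabel n (2 * n + 1 - r),
        signedLabel_mem_toATB.2 ⟨not_not.1 ((hS.1 r hr).not.1 hrC), by omega⟩, ?_⟩
      rw [signedLabel_reflect (by omega), neg_neg]

lemma unrestricted_toATB_iff (hA : IsAT (2 * n) C L U) (hS : IsSymAT n C L U) {r : ℕ}
    (hr : r ∈ Icc 1 (2 * n) \ C) :
    ((∀ q ∈ (toATB n (C, L, U)).2.1, q.1 ≠ signedLabel n r) ∧
        ∀ q ∈ (toATB n (C, L, U)).2.2, q.2 ≠ |signedLabel n r|) ↔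
      ∀ p ∈ L, p.1 ≠ r := by
  obtain ⟨hr, hrC⟩ := mem_sdiff.1 hr
  have hr' := mem_Icc.1 hr
  simp only [toATB, keptPart, mem_image, mem_filter]
  constructor
  · rintro ⟨hL, hU⟩ p hp rfl
    obtain ⟨-, h12, h2, -⟩ := IsAT.cell hA (mem_union_left U hp)
    by_cases hkept : 2 * n + 1 < p.1 + p.2
    · exact hL _ ⟨p, ⟨hp, hkept⟩, rfl⟩ rfl
    · have hdiag := IsSymAT.add_ne_of_mem hS hA (mem_union_left U hp)
      refine hU _ ⟨reflect n p, ⟨IsSymAT.reflect_mem_U hS hp, by simp only [reflect]; omega⟩,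
        rfl⟩ ?_
      rw [abs_of_neg (signedLabel_neg.2 (by omega)), signCell_snd, reflect,
        signedLabel_reflect (by omega)]
  · intro h
    refine ⟨?_, ?_⟩
    · rintro _ ⟨a, ⟨ha, -⟩, rfl⟩ heq
      exact h a ha (signedLabel_injective n heq)
    · rintro _ ⟨a, ⟨ha, -⟩, rfl⟩ heq
      obtain ⟨-, ha12, ha2, -, hacol⟩ := IsAT.cell hA (mem_union_right L ha)
      by_cases hnr : n < r
      · rw [abs_of_pos (signedLabel_pos.2 hnr)] at heq
        exact hrC (signedLabel_injective n heq ▸ hacol)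
      · rw [abs_of_neg (signedLabel_neg.2 (by omega)), ← signedLabel_reflect (by omega)] at heq
        refine h _ (IsSymAT.reflect_mem_L hS ha (by omega) (by omega)) ?_
        have := signedLabel_injective n heq
        simp only [reflect]
        omega

theorem urrB_toATB (hA : IsAT (2 * n) C L U) (hS : IsSymAT n C L U) :
    urrB n (toATB n (C, L, U)).1 (toATB n (C, L, U)).2.1 (toATB n (C, L, U)).2.2 =
      urrA (2 * n) C L := by
  rw [urrB, urrA, rowsB_toATB hA hS, filter_image,
    card_image_of_injective _ (signedLabel_injective n)]
  exact congrArg card (filter_congr fun r hr => unrestricted_toATB_iff hA hS hr)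

lemma of_mem_cornersB (hC' : C' ⊆ Icc 1 (n : ℤ)) {x c : ℤ} (hq : (x, c) ∈ cornersB n C') :
    c ∈ C' ∧ (x = c - 1 ∧ 2 ≤ c ∧ c - 1 ∉ C' ∨ x = -1 ∧ c = 1) := by
  have hbound {k : ℤ} (hk : k ∈ C') : 1 ≤ k ∧ k ≤ n := mem_Icc.1 (hC' hk)
  rw [cornersB, mem_filter] at hq
  simp only [cellB] at hq
  obtain ⟨-, ⟨hc, hcell⟩, hbelow, hright⟩ := hq
  refine ⟨hc, ?_⟩
  have := hbound hc
  rcases hcell with ⟨hx1, -, hxC, hxc⟩ | ⟨hx0, hxC, hxc⟩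
  · have hx : x = c - 1 := by
      by_contra hne
      by_cases hm : c - 1 ∈ C'
      · exact hright (c - 1) (by omega) ⟨hm, Or.inl ⟨hx1, by omega, hxC, by omega⟩⟩
      · exact hbelow (c - 1) (by omega) ⟨hc, Or.inl ⟨by omega, by omega, hm, by omega⟩⟩
    subst hx
    exact Or.inl ⟨rfl, by omega, hxC⟩
  · have := hbound hxC
    have hx : x = -1 := by
      by_contra hne
      by_cases hm : -x - 1 ∈ C'
      · refine hbelow (x + 1) (by omega) ⟨hc, Or.inr ⟨by omega, ?_, by omega⟩⟩
        rwa [neg_add', sub_eq_add_neg]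
      · exact hbelow (-x - 1) (by omega) ⟨hc, Or.inl ⟨by omega, by omega, hm, by omega⟩⟩
    subst hx
    refine Or.inr ⟨rfl, ?_⟩
    by_contra hne
    exact hright 1 (by omega) ⟨by simpa using hxC, Or.inr ⟨by omega, hxC, le_rfl⟩⟩

lemma mem_cornersB (hC' : C' ⊆ Icc 1 (n : ℤ)) {q : ℤ × ℤ} :
    q ∈ cornersB n C' ↔
      q.2 ∈ C' ∧ (q.1 = q.2 - 1 ∧ 2 ≤ q.2 ∧ q.2 - 1 ∉ C' ∨ q = (-1, 1)) := by
  obtain ⟨x, c⟩ := q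
  refine ⟨fun hq => by simpa only [Prod.mk.injEq] using of_mem_cornersB hC' hq, ?_⟩
  have hbound {k : ℤ} (hk : k ∈ C') : 1 ≤ k ∧ k ≤ n := mem_Icc.1 (hC' hk)
  rw [cornersB, mem_filter]
  simp only [cellB, mem_product, mem_Icc, Prod.mk.injEq]
  rintro ⟨hc, ⟨rfl, h2, hm⟩ | ⟨rfl, rfl⟩⟩ <;> have := hbound hc
  · refine ⟨⟨⟨by omega, by omega⟩, by omega, by omega⟩,
      ⟨hc, Or.inl ⟨by omega, by omega, hm, by omega⟩⟩, ?_, ?_⟩ <;>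
      rintro _ _ ⟨-, ⟨_, _, _, _⟩ | ⟨_, _, _⟩⟩ <;> omega
  · refine ⟨⟨⟨by omega, by omega⟩, by omega, by omega⟩,
      ⟨hc, Or.inr ⟨by omega, by simpa using hc, le_rfl⟩⟩, ?_, ?_⟩
    · rintro _ _ ⟨-, ⟨_, _, _, _⟩ | ⟨_, _, _⟩⟩ <;> omega
    · rintro c' hc' ⟨hc'C, -⟩
      have := hbound hc'C
      omega

lemma nocDiagB_eq (hB : IsATB n C' L' U') :
    nocDiagB n C' L' U' = if (1 : ℤ) ∈ C' then 1 else 0 := by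
  have hdiag : (cornersB n C').filter (fun p => p.1 = -p.2 ∧ p ∉ L' ∪ U') =
      if (1 : ℤ) ∈ C' then {(-1, 1)} else ∅ := by
    ext q
    rw [mem_filter, mem_cornersB hB.1]
    split_ifs with h1
    · rw [mem_singleton]
      constructor
      · rintro ⟨⟨-, ⟨h, -, -⟩ | h⟩, hq, -⟩
        · omega
        · exact h
      · rintro rfl
        exact ⟨⟨h1, Or.inr rfl⟩, rfl,
          fun h => absurd (IsATB.cell hB h).2.2.2.2.1 (by norm_num)⟩
    · simp only [notMem_empty, iff_false, not_and]
      rintro ⟨hc, ⟨h, -, -⟩ | rfl⟩ hq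
      · omega
      · exact absurd hc h1
  rw [nocDiagB, hdiag]
  split_ifs <;> rfl

lemma nocOffB_eq (hB : IsATB n C' L' U') :
    nocOffB n C' L' U' =
      (C'.filter fun c => 2 ≤ c ∧ c - 1 ∉ C' ∧ (c - 1, c) ∉ L' ∪ U').card := by
  have hoff : (cornersB n C').filter (fun p => p.1 ≠ -p.2 ∧ p ∉ L' ∪ U') =
      (C'.filter fun c => 2 ≤ c ∧ c - 1 ∉ C' ∧ (c - 1, c) ∉ L' ∪ U').image
        (fun c => (c - 1, c)) := by
    ext ⟨x, c⟩
    simp only [mem_filter, mem_cornersB hB.1, mem_image, Prod.mk.injEq]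
    constructor
    · rintro ⟨⟨hc, ⟨rfl, h2, hm⟩ | ⟨rfl, rfl⟩⟩, hne, hnot⟩
      · exact ⟨c, ⟨hc, h2, hm, hnot⟩, rfl, rfl⟩
      · exact absurd rfl hne
    · rintro ⟨c, ⟨hc, h2, hm, hnot⟩, rfl, rfl⟩
      exact ⟨⟨hc, Or.inl ⟨rfl, h2, hm⟩⟩, by omega, hnot⟩
  rw [nocOffB, hoff, card_image_of_injective _ fun a b h => (Prod.ext_iff.1 h).2]

def emptyCorners (m : ℕ) (C : Finset ℕ) (L U : Finset (ℕ × ℕ)) : Finset ℕ :=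
  C.filter fun c => c - 1 ∈ Icc 1 m \ C ∧ (c - 1, c) ∉ L ∪ U

lemma reflect_mem_emptyCorners (hA : IsAT (2 * n) C L U) (hS : IsSymAT n C L U) {c : ℕ}
    (hc : c ∈ emptyCorners (2 * n) C L U) : 2 * n + 2 - c ∈ emptyCorners (2 * n) C L U := by
  simp only [emptyCorners, mem_filter, mem_sdiff, mem_Icc] at hc ⊢
  obtain ⟨hcC, ⟨⟨h1, h2⟩, hc1C⟩, hempty⟩ := hc
  have hc' := mem_Icc.1 (hA.1 hcC)
  have hrefl := (hS.1 (c - 1) (mem_Icc.2 ⟨h1, h2⟩)).not.1 hc1C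
  have hrefl1 := (hS.1 c (hA.1 hcC)).1 hcC
  refine ⟨by rwa [not_not, show 2 * n + 1 - (c - 1) = 2 * n + 2 - c by omega] at hrefl,
    ⟨⟨by omega, by omega⟩, by rwa [show 2 * n + 2 - c - 1 = 2 * n + 1 - c by omega]⟩, ?_⟩
  intro hmem
  have := IsSymAT.reflect_mem hS hmem (by omega) (by omega)
  simp only [reflect] at this
  rw [show 2 * n + 1 - (2 * n + 2 - c) = c - 1 by omega,
    show 2 * n + 1 - (2 * n + 2 - c - 1) = c by omega] at this
  exact hempty this

lemma succ_mem_emptyCorners_iff (hA : IsAT (2 * n) C L U) (hS : IsSymAT n C L U) :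
    n + 1 ∈ emptyCorners (2 * n) C L U ↔ n + 1 ∈ C := by
  refine ⟨fun h => (mem_filter.1 h).1, fun h => mem_filter.2 ⟨h, ?_, fun hmem => ?_⟩⟩
  · have := mem_Icc.1 (hA.1 h)
    rw [mem_sdiff, mem_Icc, Nat.add_sub_cancel, hS.1 n (mem_Icc.2 ⟨by omega, by omega⟩),
      show 2 * n + 1 - n = n + 1 by omega, not_not]
    exact ⟨⟨by omega, by omega⟩, h⟩
  · exact IsSymAT.add_ne_of_mem hS hA hmem (by simp only; omega)

lemma card_emptyCorners_low (hA : IsAT (2 * n) C L U) (hS : IsSymAT n C L U) :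
    ((emptyCorners (2 * n) C L U).filter fun c => c ≤ n).card =
      ((emptyCorners (2 * n) C L U).filter fun c => n + 1 < c).card := by
  have hbound {c : ℕ} (hc : c ∈ emptyCorners (2 * n) C L U) : c ≤ 2 * n :=
    (mem_Icc.1 (hA.1 (mem_filter.1 hc).1)).2
  refine card_nbij' (2 * n + 2 - ·) (2 * n + 2 - ·) ?_ ?_ ?_ ?_ <;> intro c hc <;>
    simp only [coe_filter, Set.mem_ofPred_eq] at hc ⊢ <;> have := hbound hc.1
  · exact ⟨reflect_mem_emptyCorners hA hS hc.1, by omega⟩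
  · exact ⟨reflect_mem_emptyCorners hA hS hc.1, by omega⟩
  · omega
  · omega

lemma nocA_eq (hA : IsAT (2 * n) C L U) (hS : IsSymAT n C L U) :
    nocA (2 * n) C L U = (if n + 1 ∈ C then 1 else 0) +
      2 * ((emptyCorners (2 * n) C L U).filter fun c => n + 1 < c).card := by
  set E := emptyCorners (2 * n) C L U
  have hmiddle : (E.filter fun c => c = n + 1).card = if n + 1 ∈ C then 1 else 0 := by
    rw [filter_eq', apply_ite card, card_singleton, card_empty]
    exact if_congr (succ_mem_emptyCorners_iff hA hS) rfl rfl
  have hlow : (E.filter fun c => c ≤ n).card = (E.filter fun c => n + 1 < c).card :=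
    card_emptyCorners_low hA hS
  have hsplit := card_filter_add_card_filter_not (s := E) (fun c => c ≤ n)
  have hsplit' : (E.filter fun c => ¬ c ≤ n).card =
      (E.filter fun c => c = n + 1).card + (E.filter fun c => n + 1 < c).card := by
    rw [← card_filter_add_card_filter_not (s := E.filter fun c => ¬ c ≤ n)
      (fun c => c = n + 1), filter_filter, filter_filter]
    congr 2 <;> exact filter_congr fun c _ => by omega
  rw [show nocA (2 * n) C L U = E.card from rfl, ← hmiddle]
  omega

lemma card_emptyCorners_high (hA : IsAT (2 * n) C L U) :
    ((emptyCorners (2 * n) C L U).filter fun c => n + 1 < c).card =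
      ((toATB n (C, L, U)).1.filter fun c => 2 ≤ c ∧ c - 1 ∉ (toATB n (C, L, U)).1 ∧
        (c - 1, c) ∉ (toATB n (C, L, U)).2.1 ∪ (toATB n (C, L, U)).2.2).card := by
  rw [← card_image_of_injective _ (signedLabel_injective n)]
  congr 1
  have hshift {c : ℕ} (hc : n + 1 < c) :
      (signedLabel n c - 1, signedLabel n c) = signCell n (c - 1, c) := by
    simp only [signCell, Prod.map, signedLabel_of_lt hc.le,
      signedLabel_of_lt (by omega : n < c - 1)]
    congr 1
    omega
  ext x
  simp only [emptyCorners, mem_image, mem_filter, mem_sdiff, mem_Icc]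
  constructor
  · rintro ⟨c, ⟨⟨hc, ⟨-, hc1⟩, hempty⟩, hlt⟩, rfl⟩
    refine ⟨signedLabel_mem_toATB.2 ⟨hc, by omega⟩, by rw [signedLabel_of_lt (by omega)]; omega,
      ?_, ?_⟩
    · rw [show signedLabel n c - 1 = signedLabel n (c - 1) from congrArg Prod.fst (hshift hlt),
        signedLabel_mem_toATB]
      exact fun h => hc1 h.1
    · rw [hshift hlt, signCell_mem_toATB_arrows]
      exact fun h => hempty h.1
  · rintro ⟨hx, h2, hx1, hempty⟩
    simp only [toATB, mem_image, mem_filter] at hx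
    obtain ⟨c, ⟨hc, hnc⟩, rfl⟩ := hx
    rw [signedLabel_of_lt hnc] at h2
    have hlt : n + 1 < c := by omega
    have hc2 := (mem_Icc.1 (hA.1 hc)).2
    refine ⟨c, ⟨⟨hc, ⟨⟨by omega, by omega⟩, fun h => hx1 ?_⟩, fun h => hempty ?_⟩, hlt⟩, rfl⟩
    · rw [show signedLabel n c - 1 = signedLabel n (c - 1) from congrArg Prod.fst (hshift hlt)]
      exact signedLabel_mem_toATB.2 ⟨h, by omega⟩
    · rw [hshift hlt, signCell_mem_toATB_arrows]
      exact ⟨h, by omega⟩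

theorem nocA_toATB (hA : IsAT (2 * n) C L U) (hS : IsSymAT n C L U) :
    nocA (2 * n) C L U =
      nocDiagB n (toATB n (C, L, U)).1 (toATB n (C, L, U)).2.1 (toATB n (C, L, U)).2.2 +
        2 * nocOffB n (toATB n (C, L, U)).1 (toATB n (C, L, U)).2.1 (toATB n (C, L, U)).2.2 := by
  have hB := isATB_toATB hA hS
  rw [nocA_eq hA hS, nocDiagB_eq hB, nocOffB_eq hB, card_emptyCorners_high hA]
  have h1 := signedLabel_mem_toATB (n := n) (C := C) (L := L) (U := U) (k := n + 1)
  rw [signedLabel_of_lt (by omega), Nat.cast_add_one, add_sub_cancel_left] at h1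
  simp [h1]

lemma mem_ATset_iff {m : ℕ} {T : Finset ℕ × Finset (ℕ × ℕ) × Finset (ℕ × ℕ)} :
    T ∈ ATset m ↔ IsAT m T.1 T.2.1 T.2.2 := by
  rw [ATset, mem_filter, and_iff_right_iff_imp]
  intro hA
  have hbox {p : ℕ × ℕ} (hp : p ∈ T.2.1 ∪ T.2.2) : p ∈ Icc 1 m ×ˢ Icc 1 m := by
    obtain ⟨h1, h12, h2, -⟩ := IsAT.cell hA hp
    simp only [mem_product, mem_Icc]
    omega
  simp only [mem_product, mem_powerset]
  exact ⟨hA.1, fun p hp => hbox (mem_union_left _ hp), fun p hp => hbox (mem_union_right _ hp)⟩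

lemma mem_ATB_iff {T : Finset ℤ × Finset (ℤ × ℤ) × Finset (ℤ × ℤ)} :
    T ∈ ATB n ↔ IsATB n T.1 T.2.1 T.2.2 := by
  rw [ATB, mem_filter, and_iff_right_iff_imp]
  intro hB
  have hbox {q : ℤ × ℤ} (hq : q ∈ T.2.1 ∪ T.2.2) :
      q ∈ Icc (-(n : ℤ)) n ×ˢ Icc (1 : ℤ) n := by
    obtain ⟨hcol, -, hrow, h12, -⟩ := IsATB.cell hB hq
    have := mem_Icc.1 (hB.1 hcol)
    simp only [mem_product, mem_Icc]
    omega
  simp only [mem_product, mem_powerset]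
  exact ⟨hB.1, fun q hq => hbox (mem_union_left _ hq), fun q hq => hbox (mem_union_right _ hq)⟩

end SymATB

theorem symAT_ATB_bijection_general (n : ℕ) :
    ∃ g : Finset ℕ × Finset (ℕ × ℕ) × Finset (ℕ × ℕ) →
        Finset ℤ × Finset (ℤ × ℤ) × Finset (ℤ × ℤ),
      Set.BijOn g
        (((ATset (2 * n)).filter (fun T => IsSymAT n T.1 T.2.1 T.2.2)) : Set _)
        (ATB n : Set _) ∧
      ∀ T ∈ (ATset (2 * n)).filter (fun T => IsSymAT n T.1 T.2.1 T.2.2),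
        urrB n (g T).1 (g T).2.1 (g T).2.2 = urrA (2 * n) T.1 T.2.1 ∧
        nocA (2 * n) T.1 T.2.1 T.2.2 =
          nocDiagB n (g T).1 (g T).2.1 (g T).2.2 +
            2 * nocOffB n (g T).1 (g T).2.1 (g T).2.2 := by
  have hsym {T : Finset ℕ × Finset (ℕ × ℕ) × Finset (ℕ × ℕ)} :
      T ∈ (ATset (2 * n)).filter (fun T => IsSymAT n T.1 T.2.1 T.2.2) ↔
        IsAT (2 * n) T.1 T.2.1 T.2.2 ∧ IsSymAT n T.1 T.2.1 T.2.2 := by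
    rw [mem_filter, SymATB.mem_ATset_iff]
  refine ⟨SymATB.toATB n, Set.InvOn.bijOn (f' := SymATB.ofATB n) ⟨?_, ?_⟩ ?_ ?_, ?_⟩
  · rintro ⟨C, L, U⟩ hT
    exact SymATB.ofATB_toATB (hsym.1 hT).1 (hsym.1 hT).2
  · rintro ⟨C', L', U'⟩ hT
    exact SymATB.toATB_ofATB (SymATB.mem_ATB_iff.1 hT)
  · rintro ⟨C, L, U⟩ hT
    exact SymATB.mem_ATB_iff.2 (SymATB.isATB_toATB (hsym.1 hT).1 (hsym.1 hT).2)
  · rintro ⟨C', L', U'⟩ hT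
    exact hsym.2 ⟨SymATB.isAT_ofATB (SymATB.mem_ATB_iff.1 hT), SymATB.isSymAT_ofATB _⟩
  · rintro ⟨C, L, U⟩ hT
    exact ⟨SymATB.urrB_toATB (hsym.1 hT).1 (hsym.1 hT).2,
      SymATB.nocA_toATB (hsym.1 hT).1 (hsym.1 hT).2⟩

/-- there is a bijection between symmetric alternative
tableaux of size `2n` and type B alternative tableaux of size `n` which
preserves the number of unrestricted rows and sends the number of
non-occupied corners to `noc' + 2 noc''`. -/
theorem symAT_ATB_bijection (n : ℕ) (hn : 1 ≤ n) :
    ∃ g : Finset ℕ × Finset (ℕ × ℕ) × Finset (ℕ × ℕ) →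
        Finset ℤ × Finset (ℤ × ℤ) × Finset (ℤ × ℤ),
      Set.BijOn g
        (((ATset (2 * n)).filter (fun T => IsSymAT n T.1 T.2.1 T.2.2)) : Set _)
        (ATB n : Set _) ∧
      ∀ T ∈ (ATset (2 * n)).filter (fun T => IsSymAT n T.1 T.2.1 T.2.2),
        urrB n (g T).1 (g T).2.1 (g T).2.2 = urrA (2 * n) T.1 T.2.1 ∧
        nocA (2 * n) T.1 T.2.1 T.2.2 =
          nocDiagB n (g T).1 (g T).2.1 (g T).2.2 +
            2 * nocOffB n (g T).1 (g T).2.1 (g T).2.2 :=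
  symAT_ATB_bijection_general n
end
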